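/- Let S_P ∈ ℂ^{n×l} (n = ml) be the periodic pilot with row k equal to the ((k−1 mod l)+1)-th standard basis row scaled by √ρ, and S_T ∈ ℂ^{n×l} the time-division pilot whose row k equals √ρ times the (⌈k/m⌉)-th standard basis row. Then both satisfy S†S = (nρ/l)·I_l, and the weighted quadratic pilot statistic β(S) := ∑_{k1=1}^{n} ∑_{k2=1}^{n} (k1−k2)² |∑_t s_{t,k1} \overline{s_{t,k2}}|² satisfies β(S_P) = (ρ² / (6 l)) · n²(n² − l²) and β(S_T) = β(S_P)/l². -/

import Mathlib

open Complex

section helpers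
open Finset

lemma sum_id_real (m : ℕ) : ∑ i ∈ range m, (i:ℝ) = m*(m-1)/2 := by
  induction m with
  | zero => simp
  | succ k ih => rw [Finset.sum_range_succ, ih]; push_cast; ring

lemma sum_sq_real (m : ℕ) : ∑ i ∈ range m, (i:ℝ)^2 = m*(m-1)*(2*m-1)/6 := by
  induction m with
  | zero => simp
  | succ k ih => rw [Finset.sum_range_succ, ih]; push_cast; ring

lemma Dsum (m : ℕ) : ∑ i ∈ range m, ∑ j ∈ range m, ((i:ℝ)-j)^2 = m^2*(m^2-1)/6 := by
  have h : ∀ i : ℕ, ∑ j ∈ range m, ((i:ℝ)-j)^2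
      = (i:ℝ)^2*m - (2*(i:ℝ))*(m*(m-1)/2) + m*(m-1)*(2*m-1)/6 := by
    intro i
    have e : ∀ j : ℕ, ((i:ℝ)-j)^2 = (i:ℝ)^2 - (2*(i:ℝ))*j + (j:ℝ)^2 := by intro j; ring
    simp_rw [e]
    rw [Finset.sum_add_distrib, Finset.sum_sub_distrib, Finset.sum_const, ← Finset.mul_sum,
      sum_id_real, sum_sq_real, Finset.card_range, nsmul_eq_mul]
    ring
  simp_rw [h]
  rw [Finset.sum_add_distrib, Finset.sum_sub_distrib, Finset.sum_const, ← Finset.sum_mul,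
    ← Finset.sum_mul,
    ← Finset.mul_sum, sum_id_real, sum_sq_real, Finset.card_range, nsmul_eq_mul]
  ring

lemma block_sum {M : Type*} [AddCommMonoid M] (a b : ℕ) (f : ℕ → M) :
    ∑ k ∈ Finset.Icc 1 (a*b), f k = ∑ i ∈ range a, ∑ j ∈ range b, f (i*b + j + 1) := by
  induction a with
  | zero => simp
  | succ c ih =>
    rw [Finset.sum_range_succ, ← ih]
    have hb : (c+1)*b = c*b + b := by ring
    rw [hb]
    have h1 : Finset.Icc 1 (c*b) = Finset.Ioc 0 (c*b) := by
      ext x; simp [Nat.lt_iff_add_one_le]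
    have h2 : Finset.Icc 1 (c*b + b) = Finset.Ioc 0 (c*b + b) := by
      ext x; simp [Nat.lt_iff_add_one_le]
    rw [h1, h2, ← Finset.sum_Ioc_consecutive f (Nat.zero_le (c*b)) (Nat.le_add_right _ b)]
    congr 1
    have h3 : Finset.Ioc (c*b) (c*b + b) = Finset.Ico (c*b+1) (c*b+b+1) := by
      ext x; simp only [Finset.mem_Ioc, Finset.mem_Ico]; omega
    rw [h3, Finset.sum_Ico_eq_sum_range]
    have hh : c*b + b + 1 - (c*b+1) = b := by omega
    rw [hh]
    exact Finset.sum_congr rfl fun j _ => by congr 1; omega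

lemma sum_ite_const {α M : Type*} [AddCommMonoid M] (s : Finset α) (P : Prop) [Decidable P]
    (f : α → M) : ∑ x ∈ s, (if P then f x else 0) = if P then ∑ x ∈ s, f x else 0 := by
  split_ifs <;> simp

lemma coreOrtho (A B t1 t2 : ℕ) (h1 : 1 ≤ t1) (hh1 : t1 ≤ B) (h2 : 1 ≤ t2) (hh2 : t2 ≤ B)
    (c : ℂ) :
    ∑ i ∈ range A, ∑ j ∈ range B, (if j = t1-1 ∧ j = t2-1 then c else 0)
      = if t1 = t2 then (A:ℂ)*c else 0 := by
  by_cases ht : t1 = t2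
  · subst ht; rw [if_pos rfl]
    have key : ∀ i:ℕ, ∑ j ∈ range B, (if j = t1-1 ∧ j = t1-1 then c else 0) = c := by
      intro i
      simp only [and_self]
      rw [Finset.sum_ite_eq' (range B), if_pos (Finset.mem_range.mpr (by omega))]
    rw [Finset.sum_congr rfl (fun i _ => key i), Finset.sum_const, Finset.card_range,
      nsmul_eq_mul]
  · rw [if_neg ht]
    apply Finset.sum_eq_zero; intro i _
    apply Finset.sum_eq_zero; intro j _
    rw [if_neg]; rintro ⟨ha, hb⟩; exact ht (by omega)

lemma coreBeta (A B : ℕ) (c : ℝ) :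
    ∑ i1 ∈ range A, ∑ j1 ∈ range B, ∑ i2 ∈ range A, ∑ j2 ∈ range B,
      (if j1 = j2 then (((i1*B+j1+1 : ℕ):ℝ) - ((i2*B+j2+1 : ℕ):ℝ))^2 * c else 0)
    = (B:ℝ)^3*((A:ℝ)^2*((A:ℝ)^2-1)/6)*c := by
  have step : ∀ i1 ∈ range A, ∀ j1 ∈ range B, ∀ i2 ∈ range A,
      (∑ j2 ∈ range B, if j1 = j2 then (((i1*B+j1+1 : ℕ):ℝ) - ((i2*B+j2+1 : ℕ):ℝ))^2 * c else 0)
      = (B:ℝ)^2*((i1:ℝ)-(i2:ℝ))^2*c := by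
    intro i1 _ j1 hj1 i2 _
    rw [Finset.sum_ite_eq (range B) j1, if_pos hj1]
    push_cast; ring
  rw [Finset.sum_congr rfl fun i1 hi1 => Finset.sum_congr rfl fun j1 hj1 =>
    Finset.sum_congr rfl fun i2 hi2 => step i1 hi1 j1 hj1 i2 hi2]
  have step2 : ∀ i1 : ℕ, ∑ j1 ∈ range B, ∑ i2 ∈ range A, (B:ℝ)^2*((i1:ℝ)-(i2:ℝ))^2*c
      = ∑ i2 ∈ range A, ((B:ℝ)^3*c)*((i1:ℝ)-(i2:ℝ))^2 := by
    intro i1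
    rw [Finset.sum_const, Finset.card_range, nsmul_eq_mul, Finset.mul_sum]
    exact Finset.sum_congr rfl fun i2 _ => by ring
  rw [Finset.sum_congr rfl fun i1 _ => step2 i1]
  simp_rw [← Finset.mul_sum]
  rw [Dsum]; ring

lemma coreBetaT (A B : ℕ) (c : ℝ) :
    ∑ i1 ∈ range A, ∑ j1 ∈ range B, ∑ i2 ∈ range A, ∑ j2 ∈ range B,
      (if i1 = i2 then (((i1*B+j1+1 : ℕ):ℝ) - ((i2*B+j2+1 : ℕ):ℝ))^2 * c else 0)
    = (A:ℝ)*((B:ℝ)^2*((B:ℝ)^2-1)/6)*c := by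
  have step : ∀ i1 ∈ range A, ∀ j1 ∈ range B,
      (∑ i2 ∈ range A, ∑ j2 ∈ range B,
        if i1 = i2 then (((i1*B+j1+1 : ℕ):ℝ) - ((i2*B+j2+1 : ℕ):ℝ))^2 * c else 0)
      = ∑ j2 ∈ range B, ((j1:ℝ)-(j2:ℝ))^2*c := by
    intro i1 hi1 j1 _
    have e : ∀ i2 : ℕ, (∑ j2 ∈ range B,
        if i1 = i2 then (((i1*B+j1+1 : ℕ):ℝ) - ((i2*B+j2+1 : ℕ):ℝ))^2 * c else 0)
        = if i1 = i2 then ∑ j2 ∈ range B,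
            (((i1*B+j1+1 : ℕ):ℝ) - ((i2*B+j2+1 : ℕ):ℝ))^2 * c else 0 := by
      intro i2; exact sum_ite_const _ _ _
    rw [Finset.sum_congr rfl fun i2 _ => e i2, Finset.sum_ite_eq (range A) i1, if_pos hi1]
    exact Finset.sum_congr rfl fun j2 _ => by push_cast; ring
  rw [Finset.sum_congr rfl fun i1 hi1 => Finset.sum_congr rfl fun j1 hj1 => step i1 hi1 j1 hj1]
  have step2 : ∀ i1 ∈ range A, ∑ j1 ∈ range B, ∑ j2 ∈ range B, ((j1:ℝ)-(j2:ℝ))^2*c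
      = ((B:ℝ)^2*((B:ℝ)^2-1)/6)*c := by
    intro i1 _
    simp_rw [← Finset.sum_mul]
    rw [Dsum]
  rw [Finset.sum_congr rfl step2, Finset.sum_const, Finset.card_range, nsmul_eq_mul]; ring

end helpers

theorem stmt_12 (l m : ℕ) (hl : 0 < l) (hm : 0 < m) (n : ℕ) (hn : n = m * l)
    (ρ : ℝ) (hρ : 0 < ρ)
    (sP sT : ℕ → ℕ → ℂ)
    (hsP : ∀ t ∈ Finset.Icc 1 l, ∀ k ∈ Finset.Icc 1 n,
      sP t k = if (k - 1) % l = t - 1 then ((Real.sqrt ρ : ℝ) : ℂ) else 0)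
    (hsT : ∀ t ∈ Finset.Icc 1 l, ∀ k ∈ Finset.Icc 1 n,
      sT t k = if (t - 1) * m < k ∧ k ≤ t * m then ((Real.sqrt ρ : ℝ) : ℂ) else 0)
    (β : (ℕ → ℕ → ℂ) → ℝ)
    (hβ : ∀ s, β s = ∑ k1 ∈ Finset.Icc 1 n, ∑ k2 ∈ Finset.Icc 1 n,
      ((k1 : ℝ) - (k2 : ℝ)) ^ 2 *
        ‖∑ t ∈ Finset.Icc 1 l, s t k1 * starRingEnd ℂ (s t k2)‖ ^ 2) :
    (∀ t1 ∈ Finset.Icc 1 l, ∀ t2 ∈ Finset.Icc 1 l,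
        ∑ k ∈ Finset.Icc 1 n, starRingEnd ℂ (sP t1 k) * sP t2 k
          = if t1 = t2 then (((n : ℝ) * ρ / l : ℝ) : ℂ) else 0) ∧
    (∀ t1 ∈ Finset.Icc 1 l, ∀ t2 ∈ Finset.Icc 1 l,
        ∑ k ∈ Finset.Icc 1 n, starRingEnd ℂ (sT t1 k) * sT t2 k
          = if t1 = t2 then (((n : ℝ) * ρ / l : ℝ) : ℂ) else 0) ∧
    β sP = ρ ^ 2 / (6 * (l : ℝ)) * (n : ℝ) ^ 2 * ((n : ℝ) ^ 2 - (l : ℝ) ^ 2) ∧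
    β sT = β sP / (l : ℝ) ^ 2 := by
  have hlR : (l:ℝ) ≠ 0 := Nat.cast_ne_zero.mpr hl.ne'
  have hlC : (l:ℂ) ≠ 0 := Nat.cast_ne_zero.mpr hl.ne'
  have hsq : ((Real.sqrt ρ : ℝ) : ℂ) * ((Real.sqrt ρ : ℝ) : ℂ) = ((ρ:ℝ):ℂ) := by
    rw [← Complex.ofReal_mul, Real.mul_self_sqrt hρ.le]
  have hn' : n = l * m := hn.trans (Nat.mul_comm m l)
  -- alternative description of sT via division
  have hsT' : ∀ t ∈ Finset.Icc 1 l, ∀ k ∈ Finset.Icc 1 n,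
      sT t k = if (k - 1) / m = t - 1 then ((Real.sqrt ρ : ℝ) : ℂ) else 0 := by
    intro t ht k hk
    rw [hsT t ht k hk]
    have htm : 1 ≤ t := (Finset.mem_Icc.mp ht).1
    have hk1 : 1 ≤ k := (Finset.mem_Icc.mp hk).1
    have e : t*m = (t-1)*m + m := by
      have h : t - 1 + 1 = t := by omega
      calc t*m = (t-1+1)*m := by rw [h]
        _ = (t-1)*m+m := by ring
    apply if_congr _ rfl rfl
    constructor
    · rintro ⟨ha, hb⟩
      exact Nat.div_eq_of_lt_le (by omega) (by rw [show (t-1+1)*m = (t-1)*m+m from by ring]; omega)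
    · intro hd
      have h1 : (t-1)*m ≤ k-1 := by
        calc (t-1)*m = ((k-1)/m)*m := by rw [hd]
          _ ≤ k-1 := Nat.div_mul_le_self _ _
      have hlt : (k-1)/m < t := by omega
      have h2 := (Nat.div_lt_iff_lt_mul hm).mp hlt
      constructor <;> omega
  -- mod/div computations on block coordinates
  have modc : ∀ i j : ℕ, j < l → (i*l+j+1-1) % l = j := by
    intro i j hj
    have e : i*l+j+1-1 = j + i*l := by omega
    rw [e, Nat.add_mul_mod_self_right, Nat.mod_eq_of_lt hj]
  have divc : ∀ i j : ℕ, j < m → (i*m+j+1-1) / m = i := by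
    intro i j hj
    have e : i*m+j+1-1 = j + i*m := by omega
    rw [e, Nat.add_mul_div_right _ _ hm, Nat.div_eq_of_lt hj, Nat.zero_add]
  -- generic product-of-entries lemma
  have prodP : ∀ t1 ∈ Finset.Icc 1 l, ∀ t2 ∈ Finset.Icc 1 l, ∀ k ∈ Finset.Icc 1 n,
      starRingEnd ℂ (sP t1 k) * sP t2 k
        = if (k-1) % l = t1 - 1 ∧ (k-1) % l = t2 - 1 then ((ρ:ℝ):ℂ) else 0 := by
    intro t1 ht1 t2 ht2 k hk
    rw [hsP t1 ht1 k hk, hsP t2 ht2 k hk]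
    simp only [apply_ite (starRingEnd ℂ), map_zero, Complex.conj_ofReal, ite_mul, zero_mul,
      mul_ite, mul_zero]
    split_ifs with h1 h2 h3 <;> first
      | exact hsq
      | rfl
      | (exfalso; tauto)
  have prodT : ∀ t1 ∈ Finset.Icc 1 l, ∀ t2 ∈ Finset.Icc 1 l, ∀ k ∈ Finset.Icc 1 n,
      starRingEnd ℂ (sT t1 k) * sT t2 k
        = if (k-1) / m = t1 - 1 ∧ (k-1) / m = t2 - 1 then ((ρ:ℝ):ℂ) else 0 := by
    intro t1 ht1 t2 ht2 k hk
    rw [hsT' t1 ht1 k hk, hsT' t2 ht2 k hk]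
    simp only [apply_ite (starRingEnd ℂ), map_zero, Complex.conj_ofReal, ite_mul, zero_mul,
      mul_ite, mul_zero]
    split_ifs with h1 h2 h3 <;> first
      | exact hsq
      | rfl
      | (exfalso; tauto)
  have hmval : ∀ t1 t2 : ℕ, (if t1 = t2 then ((m:ℕ):ℂ)*((ρ:ℝ):ℂ) else 0)
      = if t1 = t2 then (((n : ℝ) * ρ / l : ℝ) : ℂ) else 0 := by
    intro t1 t2
    split_ifs with h
    · rw [hn]; push_cast; field_simp
    · rfl
  have innerP : ∀ k1 ∈ Finset.Icc 1 n, ∀ k2 ∈ Finset.Icc 1 n,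
      (∑ t ∈ Finset.Icc 1 l, sP t k1 * starRingEnd ℂ (sP t k2))
        = if (k1-1) % l = (k2-1) % l then ((ρ:ℝ):ℂ) else 0 := by
    intro k1 hk1 k2 hk2
    have e : ∀ t ∈ Finset.Icc 1 l, sP t k1 * starRingEnd ℂ (sP t k2)
        = if (k1-1) % l = t-1 ∧ (k2-1) % l = t-1 then ((ρ:ℝ):ℂ) else 0 := by
      intro t ht
      rw [hsP t ht k1 hk1, hsP t ht k2 hk2]
      simp only [apply_ite (starRingEnd ℂ), map_zero, Complex.conj_ofReal, ite_mul, zero_mul,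
        mul_ite, mul_zero]
      split_ifs with h1 h2 h3 <;> first
        | exact hsq
        | rfl
        | (exfalso; tauto)
    rw [Finset.sum_congr rfl e, ← Finset.Ico_add_one_right_eq_Icc, Finset.sum_Ico_eq_sum_range]
    simp only [Nat.add_sub_cancel]
    have e2 : ∀ s : ℕ, (1 + s - 1 : ℕ) = s := fun s => by omega
    simp_rw [e2]
    by_cases hc : (k1-1) % l = (k2-1) % l
    · rw [if_pos hc]
      rw [Finset.sum_congr rfl fun s _ => if_congr (by rw [← hc, and_self]) rfl rfl]
      rw [Finset.sum_ite_eq (Finset.range l), if_pos (Finset.mem_range.mpr (Nat.mod_lt _ hl))]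
    · rw [if_neg hc]
      apply Finset.sum_eq_zero; intro s _
      rw [if_neg]; rintro ⟨ha, hb⟩; exact hc (ha.trans hb.symm)
  have innerT : ∀ k1 ∈ Finset.Icc 1 n, ∀ k2 ∈ Finset.Icc 1 n,
      (∑ t ∈ Finset.Icc 1 l, sT t k1 * starRingEnd ℂ (sT t k2))
        = if (k1-1) / m = (k2-1) / m ∧ (k1-1)/m < l then ((ρ:ℝ):ℂ) else 0 := by
    intro k1 hk1 k2 hk2
    have e : ∀ t ∈ Finset.Icc 1 l, sT t k1 * starRingEnd ℂ (sT t k2)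
        = if (k1-1) / m = t-1 ∧ (k2-1) / m = t-1 then ((ρ:ℝ):ℂ) else 0 := by
      intro t ht
      rw [hsT' t ht k1 hk1, hsT' t ht k2 hk2]
      simp only [apply_ite (starRingEnd ℂ), map_zero, Complex.conj_ofReal, ite_mul, zero_mul,
        mul_ite, mul_zero]
      split_ifs with h1 h2 h3 <;> first
        | exact hsq
        | rfl
        | (exfalso; tauto)
    rw [Finset.sum_congr rfl e, ← Finset.Ico_add_one_right_eq_Icc, Finset.sum_Ico_eq_sum_range]
    simp only [Nat.add_sub_cancel]
    have e2 : ∀ s : ℕ, (1 + s - 1 : ℕ) = s := fun s => by omega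
    simp_rw [e2]
    by_cases hc : (k1-1) / m = (k2-1) / m ∧ (k1-1)/m < l
    · rw [if_pos hc]
      rw [Finset.sum_congr rfl fun s _ => if_congr (by rw [← hc.1, and_self]) rfl rfl]
      rw [Finset.sum_ite_eq (Finset.range l), if_pos (Finset.mem_range.mpr hc.2)]
    · rw [if_neg hc]
      apply Finset.sum_eq_zero; intro s hs
      rw [if_neg]; rintro ⟨ha, hb⟩
      exact hc ⟨ha.trans hb.symm, ha ▸ Finset.mem_range.mp hs⟩
  -- summand of β
  have termP : ∀ k1 ∈ Finset.Icc 1 n, ∀ k2 ∈ Finset.Icc 1 n,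
      ((k1 : ℝ) - (k2 : ℝ)) ^ 2 *
        ‖∑ t ∈ Finset.Icc 1 l, sP t k1 * starRingEnd ℂ (sP t k2)‖ ^ 2
      = if (k1-1) % l = (k2-1) % l then ((k1 : ℝ) - (k2 : ℝ))^2 * ρ^2 else 0 := by
    intro k1 hk1 k2 hk2
    rw [innerP k1 hk1 k2 hk2]
    split_ifs with h
    · rw [Complex.norm_real, Real.norm_of_nonneg hρ.le]
    · simp
  have termT : ∀ k1 ∈ Finset.Icc 1 n, ∀ k2 ∈ Finset.Icc 1 n,
      ((k1 : ℝ) - (k2 : ℝ)) ^ 2 *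
        ‖∑ t ∈ Finset.Icc 1 l, sT t k1 * starRingEnd ℂ (sT t k2)‖ ^ 2
      = if (k1-1) / m = (k2-1) / m ∧ (k1-1)/m < l
          then ((k1 : ℝ) - (k2 : ℝ))^2 * ρ^2 else 0 := by
    intro k1 hk1 k2 hk2
    rw [innerT k1 hk1 k2 hk2]
    split_ifs with h
    · rw [Complex.norm_real, Real.norm_of_nonneg hρ.le]
    · simp
  have hβP : β sP = (l:ℝ)^3*((m:ℝ)^2*((m:ℝ)^2-1)/6)*ρ^2 := by
    rw [hβ sP]
    rw [Finset.sum_congr rfl fun k1 hk1 => Finset.sum_congr rfl fun k2 hk2 =>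
      termP k1 hk1 k2 hk2]
    rw [hn, block_sum m l,
      Finset.sum_congr rfl fun i1 _ => Finset.sum_congr rfl fun j1 _ => block_sum m l _,
      Finset.sum_congr rfl fun i1 _ => Finset.sum_congr rfl fun j1 hj1 =>
        Finset.sum_congr rfl fun i2 _ => Finset.sum_congr rfl fun j2 hj2 =>
          if_congr (by rw [modc i1 j1 (Finset.mem_range.mp hj1),
            modc i2 j2 (Finset.mem_range.mp hj2)]) rfl rfl,
      coreBeta m l (ρ^2)]
  have hβT : β sT = (l:ℝ)*((m:ℝ)^2*((m:ℝ)^2-1)/6)*ρ^2 := by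
    rw [hβ sT]
    rw [Finset.sum_congr rfl fun k1 hk1 => Finset.sum_congr rfl fun k2 hk2 =>
      termT k1 hk1 k2 hk2]
    rw [hn', block_sum l m,
      Finset.sum_congr rfl fun i1 _ => Finset.sum_congr rfl fun j1 _ => block_sum l m _,
      Finset.sum_congr rfl fun i1 hi1 => Finset.sum_congr rfl fun j1 hj1 =>
        Finset.sum_congr rfl fun i2 _ => Finset.sum_congr rfl fun j2 hj2 =>
          if_congr (Iff.trans
            (by rw [divc i1 j1 (Finset.mem_range.mp hj1), divc i2 j2 (Finset.mem_range.mp hj2)])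
            (and_iff_left (Finset.mem_range.mp hi1))) rfl rfl,
      coreBetaT l m (ρ^2)]
  refine ⟨?_, ?_, ?_, ?_⟩
  · -- orthogonality of sP
    intro t1 ht1 t2 ht2
    rw [Finset.sum_congr rfl fun k hk => prodP t1 ht1 t2 ht2 k hk]
    rw [show Finset.Icc 1 n = Finset.Icc 1 (m*l) from by rw [hn], block_sum m l]
    rw [Finset.sum_congr rfl fun i _ => Finset.sum_congr rfl fun j hj => by
      rw [modc i j (Finset.mem_range.mp hj)]]
    rw [coreOrtho m l t1 t2 (Finset.mem_Icc.mp ht1).1 (Finset.mem_Icc.mp ht1).2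
      (Finset.mem_Icc.mp ht2).1 (Finset.mem_Icc.mp ht2).2]
    exact hmval t1 t2
  · -- orthogonality of sT
    intro t1 ht1 t2 ht2
    rw [Finset.sum_congr rfl fun k hk => prodT t1 ht1 t2 ht2 k hk]
    rw [show Finset.Icc 1 n = Finset.Icc 1 (l*m) from by rw [hn'], block_sum l m]
    rw [Finset.sum_congr rfl fun i _ => Finset.sum_congr rfl fun j hj => by
      rw [divc i j (Finset.mem_range.mp hj)]]
    rw [Finset.sum_comm]
    rw [coreOrtho m l t1 t2 (Finset.mem_Icc.mp ht1).1 (Finset.mem_Icc.mp ht1).2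
      (Finset.mem_Icc.mp ht2).1 (Finset.mem_Icc.mp ht2).2]
    exact hmval t1 t2
  -- inner t-sums
  · rw [hβP, hn]; push_cast; field_simp
  · rw [hβP, hβT]; field_simp
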